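/- Let G and H be nontrivial connected finite graphs and ℓ ≥ 1. If T is an ℓ-solid-resolving set of G and U is an ℓ-solid-resolving set of H, then T × U is an ℓ-solid-resolving set of G □ H. Consequently, max{β_ℓ^s(G), β_ℓ^s(H)} ≤ β_ℓ^s(G □ H) ≤ β_ℓ^s(G)·β_ℓ^s(H). -/

import Mathlib

/-!
Pointwise, `S` is `ℓ`-solid-resolving iff every vertex `x` is strictly closer to some `s ∈ S`
than every vertex of any nonempty `Y ∌ x` with `|Y| ≤ ℓ`; on finite graphs this is equivalent
to separating the distances to any two sets `X ≠ Y` with `|X| ≤ ℓ`. Distances in `G □ H` add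
coordinatewise, so if `t` separates `x.1` from the first coordinates of `Y` other than `x.1`
and `u` does the same in the second coordinate, then `(t, u)` separates `x` from `Y`.
Conversely, restricted to a fibre `V × {w}`, distances from a landmark `s` are distances from
`s.1` in `G` shifted by `d_H(s.2, w)`, so the projections of a solid-resolving set of `G □ H`
are solid-resolving in `G` and in `H`.
-/

open SimpleGraph

variable {V : Type*}

/-- Distance from a vertex to a set of vertices. -/
noncomputable def dSet (G : SimpleGraph V) (s : V) (X : Set V) : ℕ :=
  sInf ((G.dist s) '' X)

/-- `S` is an `ℓ`-solid-resolving set of `G`. -/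
def LSolid (G : SimpleGraph V) (S : Set V) (ℓ : ℕ) : Prop :=
  ∀ X Y : Set V, X.Nonempty → Y.Nonempty → X.ncard ≤ ℓ → X ≠ Y →
    ∃ s ∈ S, dSet G s X ≠ dSet G s Y

/-- `S` is an `{ℓ}`-resolving set of `G`. -/
def LResolving (G : SimpleGraph V) (S : Set V) (ℓ : ℕ) : Prop :=
  ∀ X Y : Set V, X.Nonempty → Y.Nonempty → X.ncard ≤ ℓ → Y.ncard ≤ ℓ → X ≠ Y →
    ∃ s ∈ S, dSet G s X ≠ dSet G s Y

/-- The `ℓ`-solid-metric dimension of `G`. -/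
noncomputable def solidDim (G : SimpleGraph V) (ℓ : ℕ) : ℕ :=
  sInf {k | ∃ S : Set V, LSolid G S ℓ ∧ S.ncard = k}

/-- The `{ℓ}`-metric dimension of `G`. -/
noncomputable def lDim (G : SimpleGraph V) (ℓ : ℕ) : ℕ :=
  sInf {k | ∃ S : Set V, LResolving G S ℓ ∧ S.ncard = k}

theorem Set.ncard_image_sdiff_singleton_le {α β : Type*} {s : Set α} (hs : s.Finite)
    {f : α → β} {b : β} : (f '' s \ {b}).ncard ≤ s.ncard :=
  (Set.ncard_sdiff_singleton_le _ _).trans (Set.ncard_image_le hs)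

section dSet

variable {G : SimpleGraph V} {s x : V} {X Y : Set V}

theorem dSet_le_dist (hx : x ∈ X) : dSet G s X ≤ G.dist s x :=
  Nat.sInf_le ⟨x, hx, rfl⟩

theorem exists_mem_dSet_eq_dist (hX : X.Nonempty) : ∃ x ∈ X, dSet G s X = G.dist s x := by
  obtain ⟨x, hx, hval⟩ := Nat.sInf_mem (hX.image (G.dist s))
  exact ⟨x, hx, hval.symm⟩

theorem dSet_anti (hXY : X ⊆ Y) (hX : X.Nonempty) : dSet G s Y ≤ dSet G s X := by
  obtain ⟨x, hx, hval⟩ := exists_mem_dSet_eq_dist (G := G) (s := s) hX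
  exact hval ▸ dSet_le_dist (hXY hx)

theorem dSet_lt_of_forall_dist_lt (hx : x ∈ X) (hY : Y.Nonempty)
    (h : ∀ y ∈ Y, G.dist s x < G.dist s y) : dSet G s X < dSet G s Y := by
  obtain ⟨y, hy, hval⟩ := exists_mem_dSet_eq_dist (G := G) (s := s) hY
  exact hval ▸ (dSet_le_dist hx).trans_lt (h y hy)

end dSet

def IsSolidResolving (G : SimpleGraph V) (S : Set V) (ℓ : ℕ) : Prop :=
  ∀ x (Y : Set V), Y.Nonempty → Y.ncard ≤ ℓ → x ∉ Y →
    ∃ s ∈ S, ∀ y ∈ Y, G.dist s x < G.dist s y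

section IsSolidResolving

variable {G : SimpleGraph V} {S : Set V} {ℓ : ℕ}

theorem LSolid.isSolidResolving (hS : LSolid G S ℓ) : IsSolidResolving G S ℓ := by
  intro x Y hY hYc hx
  have hne : Y ≠ insert x Y := fun h => hx (h ▸ Set.mem_insert x Y)
  obtain ⟨s, hs, hd⟩ := hS Y (insert x Y) hY (Set.insert_nonempty x Y) hYc hne
  have hlt : dSet G s (insert x Y) < dSet G s Y :=
    (dSet_anti (Set.subset_insert x Y) hY).lt_of_ne hd.symm
  obtain ⟨z, hz, hval⟩ := exists_mem_dSet_eq_dist (G := G) (s := s) (Set.insert_nonempty x Y)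
  -- a nearest point of `insert x Y` lying in `Y` would make the two distances equal
  obtain rfl : z = x := by
    refine (Set.mem_insert_iff.mp hz).resolve_right fun hzY => ?_
    exact (hval ▸ hlt).not_ge (dSet_le_dist hzY)
  exact ⟨s, hs, fun y hy => hval ▸ hlt.trans_le (dSet_le_dist hy)⟩

theorem IsSolidResolving.lSolid [Finite V] (hS : IsSolidResolving G S ℓ) : LSolid G S ℓ := by
  intro X Y hX hY hXc hne
  by_cases hYX : Y ⊆ X
  · obtain ⟨x, hxX, hxY⟩ := Set.exists_of_ssubset (hYX.ssubset_of_ne hne.symm)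
    obtain ⟨s, hs, h⟩ := hS x Y hY ((Set.ncard_le_ncard hYX).trans hXc) hxY
    exact ⟨s, hs, (dSet_lt_of_forall_dist_lt hxX hY h).ne⟩
  · obtain ⟨y, hyY, hyX⟩ := Set.not_subset.mp hYX
    obtain ⟨s, hs, h⟩ := hS y X hX hXc hyX
    exact ⟨s, hs, (dSet_lt_of_forall_dist_lt hyY hX h).ne'⟩

theorem isSolidResolving_univ (hG : G.Connected) : IsSolidResolving G Set.univ ℓ :=
  fun x _ _ _ hx => ⟨x, Set.mem_univ x, fun y hy => by
    rw [dist_self]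
    exact hG.pos_dist_of_ne fun h => hx (h ▸ hy)⟩

theorem IsSolidResolving.exists_forall_dist_lt [Nontrivial V] (hℓ : 1 ≤ ℓ)
    (hS : IsSolidResolving G S ℓ) (x : V) {Y : Set V} (hYc : Y.ncard ≤ ℓ) (hx : x ∉ Y) :
    ∃ s ∈ S, ∀ y ∈ Y, G.dist s x < G.dist s y := by
  rcases Y.eq_empty_or_nonempty with rfl | hY
  · obtain ⟨y, hy⟩ := exists_ne x
    obtain ⟨s, hs, -⟩ :=
      hS x {y} (Set.singleton_nonempty y) (by simpa using hℓ) (by simpa using hy.symm)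
    exact ⟨s, hs, by simp⟩
  · exact hS x Y hY hYc hx

theorem IsSolidResolving.image_of_dist_eq_add {V' : Type*} {G' : SimpleGraph V'}
    {S' : Set V'} (hS' : IsSolidResolving G' S' ℓ) {f : V → V'} (hf : f.Injective) (g : V' → V)
    (c : V' → ℕ)
    (hdist : ∀ s v, G'.dist s (f v) = G.dist (g s) v + c s) :
    IsSolidResolving G (g '' S') ℓ := by
  intro x Y hY hYc hx
  obtain ⟨s, hs, h⟩ := hS' (f x) (f '' Y) (hY.image f)
    (by rwa [Set.ncard_image_of_injective Y hf]) (by rwa [hf.mem_set_image])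
  refine ⟨g s, Set.mem_image_of_mem g hs, fun y hy => ?_⟩
  have := h (f y) (Set.mem_image_of_mem f hy)
  rw [hdist, hdist] at this
  omega

theorem solidDim_le_ncard (hS : LSolid G S ℓ) : solidDim G ℓ ≤ S.ncard :=
  Nat.sInf_le ⟨S, hS, rfl⟩

theorem exists_lSolid_ncard_eq_solidDim [Finite V] (hG : G.Connected) (ℓ : ℕ) :
    ∃ S : Set V, LSolid G S ℓ ∧ S.ncard = solidDim G ℓ :=
  Nat.sInf_mem (s := {k | ∃ S : Set V, LSolid G S ℓ ∧ S.ncard = k})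
    ⟨_, Set.univ, (isSolidResolving_univ hG).lSolid, rfl⟩

end IsSolidResolving

section BoxProduct

variable {W : Type*} {G : SimpleGraph V} {H : SimpleGraph W} {ℓ : ℕ}

theorem SimpleGraph.dist_boxProd (hG : G.Connected) (hH : H.Connected) (x y : V × W) :
    (G □ H).dist x y = G.dist x.1 y.1 + H.dist x.2 y.2 := by
  have hx := ((hG.boxProd hH).preconnected x y).coe_dist_eq_edist
  rw [edist_boxProd, ← (hG.preconnected x.1 y.1).coe_dist_eq_edist,
    ← (hH.preconnected x.2 y.2).coe_dist_eq_edist] at hx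
  exact_mod_cast hx

theorem IsSolidResolving.boxProd [Finite V] [Finite W] [Nontrivial V] [Nontrivial W]
    {T : Set V} {U : Set W} (hG : G.Connected) (hH : H.Connected) (hℓ : 1 ≤ ℓ)
    (hT : IsSolidResolving G T ℓ) (hU : IsSolidResolving H U ℓ) :
    IsSolidResolving (G □ H) (T ×ˢ U) ℓ := by
  intro x Y _ hYc hxY
  obtain ⟨t, ht, h1⟩ :=
    hT.exists_forall_dist_lt hℓ x.1
      ((Set.ncard_image_sdiff_singleton_le Y.toFinite).trans hYc) fun h => h.2 rfl
  obtain ⟨u, hu, h2⟩ :=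
    hU.exists_forall_dist_lt hℓ x.2
      ((Set.ncard_image_sdiff_singleton_le Y.toFinite).trans hYc) fun h => h.2 rfl
  refine ⟨(t, u), Set.mk_mem_prod ht hu, fun y hy => ?_⟩
  rw [dist_boxProd hG hH, dist_boxProd hG hH]
  dsimp only
  rcases eq_or_ne y.1 x.1 with e1 | e1
  · have e2 : y.2 ≠ x.2 := fun e2 => hxY (Prod.ext e1 e2 ▸ hy)
    rw [e1]
    exact Nat.add_lt_add_left (h2 _ ⟨⟨y, hy, rfl⟩, e2⟩) _
  rcases eq_or_ne y.2 x.2 with e2 | e2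
  · rw [e2]
    exact Nat.add_lt_add_right (h1 _ ⟨⟨y, hy, rfl⟩, e1⟩) _
  · exact Nat.add_lt_add (h1 _ ⟨⟨y, hy, rfl⟩, e1⟩) (h2 _ ⟨⟨y, hy, rfl⟩, e2⟩)

theorem LSolid.boxProd [Finite V] [Finite W] [Nontrivial V] [Nontrivial W] {T : Set V}
    {U : Set W} (hG : G.Connected) (hH : H.Connected) (hℓ : 1 ≤ ℓ) (hT : LSolid G T ℓ)
    (hU : LSolid H U ℓ) : LSolid (G □ H) (T ×ˢ U) ℓ :=
  (hT.isSolidResolving.boxProd hG hH hℓ hU.isSolidResolving).lSolid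

theorem solidDim_boxProd_le_mul [Finite V] [Finite W] [Nontrivial V] [Nontrivial W]
    (hG : G.Connected) (hH : H.Connected) (hℓ : 1 ≤ ℓ) :
    solidDim (G □ H) ℓ ≤ solidDim G ℓ * solidDim H ℓ := by
  obtain ⟨T, hT, hTc⟩ := exists_lSolid_ncard_eq_solidDim hG ℓ
  obtain ⟨U, hU, hUc⟩ := exists_lSolid_ncard_eq_solidDim hH ℓ
  calc solidDim (G □ H) ℓ ≤ (T ×ˢ U).ncard := solidDim_le_ncard (hT.boxProd hG hH hℓ hU)
    _ = solidDim G ℓ * solidDim H ℓ := by rw [Set.ncard_prod, hTc, hUc]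

theorem solidDim_le_solidDim_boxProd_left [Finite V] [Finite W] [Nonempty W]
    (hG : G.Connected) (hH : H.Connected) : solidDim G ℓ ≤ solidDim (G □ H) ℓ := by
  obtain ⟨S, hS, hSc⟩ := exists_lSolid_ncard_eq_solidDim (hG.boxProd hH) ℓ
  obtain ⟨w⟩ := ‹Nonempty W›
  have hfst : LSolid G (Prod.fst '' S) ℓ :=
    (hS.isSolidResolving.image_of_dist_eq_add (f := fun v => (v, w))
      (fun _ _ h => congrArg Prod.fst h) Prod.fst (fun s => H.dist s.2 w)
      (fun s v => dist_boxProd hG hH s (v, w))).lSolid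
  exact hSc ▸ (solidDim_le_ncard hfst).trans Set.ncard_image_le

theorem solidDim_le_solidDim_boxProd_right [Finite V] [Finite W] [Nonempty V]
    (hG : G.Connected) (hH : H.Connected) : solidDim H ℓ ≤ solidDim (G □ H) ℓ := by
  obtain ⟨S, hS, hSc⟩ := exists_lSolid_ncard_eq_solidDim (hG.boxProd hH) ℓ
  obtain ⟨v⟩ := ‹Nonempty V›
  have hsnd : LSolid H (Prod.snd '' S) ℓ :=
    (hS.isSolidResolving.image_of_dist_eq_add (f := fun w => (v, w))
      (fun _ _ h => congrArg Prod.snd h) Prod.snd (fun s => G.dist s.1 v)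
      (fun s w => (dist_boxProd hG hH s (v, w)).trans (add_comm _ _))).lSolid
  exact hSc ▸ (solidDim_le_ncard hsnd).trans Set.ncard_image_le

end BoxProduct

theorem stmt_11 {W : Type*} [Fintype V] [Fintype W] [Nontrivial V] [Nontrivial W]
    (G : SimpleGraph V) (H : SimpleGraph W) (hG : G.Connected) (hH : H.Connected)
    (ℓ : ℕ) (hℓ : 1 ≤ ℓ) :
    (∀ T : Set V, ∀ U : Set W, LSolid G T ℓ → LSolid H U ℓ →
        LSolid (G.boxProd H) (T ×ˢ U) ℓ) ∧
      max (solidDim G ℓ) (solidDim H ℓ) ≤ solidDim (G.boxProd H) ℓ ∧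
      solidDim (G.boxProd H) ℓ ≤ solidDim G ℓ * solidDim H ℓ :=
  ⟨fun _ _ hT hU => hT.boxProd hG hH hℓ hU,
    max_le (solidDim_le_solidDim_boxProd_left hG hH) (solidDim_le_solidDim_boxProd_right hG hH),
    solidDim_boxProd_le_mul hG hH hℓ⟩
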